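/- If a Veltman frame F satisfies the frame condition F_{2k} (i.e., ∀w,x,y,z: wRx ∧ xRy ∧ y S_w z → G_{2k}(x,y,z)), then F validates the principle R̃_k := X_k → (Y_k ▷ Z_k) under every valuation, for all formulas A_i, B_i, C_i, E_i. -/
import Mathlib


/-- Formulas of interpretability logic: propositional variables, ⊥, →, □, ▷. -/
inductive ILForm : Type
  | var : ℕ → ILForm
  | bot : ILForm
  | impl : ILForm → ILForm → ILForm
  | box : ILForm → ILForm
  | rhd : ILForm → ILForm → ILForm
  deriving DecidableEq

namespace ILForm

def neg (A : ILForm) : ILForm := impl A bot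
def top : ILForm := neg bot
def conj (A B : ILForm) : ILForm := neg (impl A (neg B))
def disj (A B : ILForm) : ILForm := impl (neg A) B
def dia (A : ILForm) : ILForm := neg (box (neg A))

end ILForm

infixr:30 " ⟹ " => ILForm.impl
infixl:65 " ⋀ " => ILForm.conj
infixl:64 " ⋁ " => ILForm.disj
infix:50 " ▷ " => ILForm.rhd
prefix:70 "□" => ILForm.box
prefix:70 "◇" => ILForm.dia
prefix:70 "∼" => ILForm.neg

/-- Propositional evaluation of a formula, treating boxed and ▷-formulas
(and variables) as atoms evaluated by `g`.  A formula is an instance of a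
propositional tautology iff it evaluates to `true` under every such `g`. -/
def ILForm.evalProp (g : ILForm → Bool) : ILForm → Bool
  | .bot => false
  | .impl a b => !(ILForm.evalProp g a) || ILForm.evalProp g b
  | f => g f

/-- Hilbert-style provability in the interpretability logic IL extended with
an additional set `Ax` of axioms. -/
inductive ILProv (Ax : Set ILForm) : ILForm → Prop
  | ax {A : ILForm} : A ∈ Ax → ILProv Ax A
  | taut {A : ILForm} : (∀ g : ILForm → Bool, A.evalProp g = true) → ILProv Ax A
  | L1 (A B : ILForm) : ILProv Ax ((□(A ⟹ B)) ⟹ ((□A) ⟹ (□B)))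
  | L2 (A : ILForm) : ILProv Ax ((□A) ⟹ (□□A))
  | L3 (A : ILForm) : ILProv Ax ((□((□A) ⟹ A)) ⟹ (□A))
  | J1 (A B : ILForm) : ILProv Ax ((□(A ⟹ B)) ⟹ (A ▷ B))
  | J2 (A B C : ILForm) : ILProv Ax (((A ▷ B) ⋀ (B ▷ C)) ⟹ (A ▷ C))
  | J3 (A B C : ILForm) : ILProv Ax (((A ▷ C) ⋀ (B ▷ C)) ⟹ ((A ⋁ B) ▷ C))
  | J4 (A B : ILForm) : ILProv Ax ((A ▷ B) ⟹ ((◇A) ⟹ (◇B)))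
  | J5 (A : ILForm) : ILProv Ax ((◇A) ▷ A)
  | mp {A B : ILForm} : ILProv Ax (A ⟹ B) → ILProv Ax A → ILProv Ax B
  | nec {A : ILForm} : ILProv Ax A → ILProv Ax (□A)

/-- Substitution of formulas for propositional variables. -/
def ILForm.substVar (σ : ℕ → ILForm) : ILForm → ILForm
  | .var n => σ n
  | .bot => .bot
  | .impl a b => .impl (ILForm.substVar σ a) (ILForm.substVar σ b)
  | .box a => .box (ILForm.substVar σ a)
  | .rhd a b => .rhd (ILForm.substVar σ a) (ILForm.substVar σ b)

/-- All substitution instances of a modal scheme. -/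
def instancesOf (A : ILForm) : Set ILForm := {B | ∃ σ : ℕ → ILForm, B = ILForm.substVar σ A}

/-- Helper for simultaneous replacement of subformula occurrences. -/
def ILForm.hit (ps : List (ILForm × ILForm)) (f : ILForm) : Option ILForm :=
  (ps.find? fun pq => decide (pq.1 = f)).map (·.2)

/-- Simultaneous replacement of (outermost) occurrences of the patterns
`p` by the corresponding `q`, for `(p,q)` in the list `ps`. -/
def ILForm.replL (ps : List (ILForm × ILForm)) : ILForm → ILForm
  | .var n => (ILForm.hit ps (.var n)).getD (.var n)
  | .bot => (ILForm.hit ps .bot).getD .bot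
  | .impl a b =>
      (ILForm.hit ps (.impl a b)).getD (.impl (ILForm.replL ps a) (ILForm.replL ps b))
  | .box a => (ILForm.hit ps (.box a)).getD (.box (ILForm.replL ps a))
  | .rhd a b =>
      (ILForm.hit ps (.rhd a b)).getD (.rhd (ILForm.replL ps a) (ILForm.replL ps b))

/-- The placeholder variables `A_n`, `B_n`, `C_n`, `E_n`. -/
def Av (n : ℕ) : ILForm := .var (4*n)
def Bv (n : ℕ) : ILForm := .var (4*n+1)
def Cv (n : ℕ) : ILForm := .var (4*n+2)
def Ev (n : ℕ) : ILForm := .var (4*n+3)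

/-- The slim series `R_n`, defined by the substitutions of the paper:
`R_0 := A_0▷B_0 → ¬(A_0▷¬C_0) ▷ B_0∧□C_0`;
`R_{2n+1} := R_{2n}[¬(A_n▷¬C_n)/¬(A_n▷¬C_n)∧(E_{n+1}▷◇A_{n+1});
                    B_n∧□C_n/B_n∧□C_n∧(E_{n+1}▷A_{n+1})]`;
`R_{2n+2} := R_{2n+1}[B_n/B_n∧(A_{n+1}▷B_{n+1}); ◇A_{n+1}/¬(A_{n+1}▷¬C_{n+1});
     (E_{n+1}▷A_{n+1})/(E_{n+1}▷A_{n+1})∧(E_{n+1}▷B_{n+1}∧□C_{n+1})]`. -/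
def Rser : ℕ → ILForm
  | 0 => (Av 0 ▷ Bv 0) ⟹ ((∼(Av 0 ▷ (∼(Cv 0)))) ▷ ((Bv 0) ⋀ (□(Cv 0))))
  | n+1 =>
    let k := n / 2
    if n % 2 = 0 then
      ILForm.replL
        [ (∼(Av k ▷ (∼(Cv k))), (∼(Av k ▷ (∼(Cv k)))) ⋀ (Ev (k+1) ▷ (◇(Av (k+1))))),
          ((Bv k) ⋀ (□(Cv k)), ((Bv k) ⋀ (□(Cv k))) ⋀ (Ev (k+1) ▷ Av (k+1))) ]
        (Rser n)
    else
      ILForm.replL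
        [ (Bv k, (Bv k) ⋀ (Av (k+1) ▷ Bv (k+1))),
          (◇(Av (k+1)), ∼(Av (k+1) ▷ (∼(Cv (k+1))))),
          (Ev (k+1) ▷ Av (k+1),
            (Ev (k+1) ▷ Av (k+1)) ⋀ (Ev (k+1) ▷ ((Bv (k+1)) ⋀ (□(Cv (k+1)))))) ]
        (Rser n)

/-- The formulas `X_n` of the well-behaved subhierarchy. -/
def Xt (A B : ℕ → ILForm) : ℕ → ILForm
  | 0 => A 0 ▷ B 0
  | n+1 => A (n+1) ▷ ((B (n+1)) ⋀ (Xt A B n))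

/-- The formulas `Y_n` of the well-behaved subhierarchy. -/
def Yt (A C E : ℕ → ILForm) : ℕ → ILForm
  | 0 => ∼(A 0 ▷ (∼(C 0)))
  | n+1 => (∼(A (n+1) ▷ (∼(C (n+1))))) ⋀ (E (n+1) ▷ (Yt A C E n))

/-- The formulas `Z_n` of the well-behaved subhierarchy. -/
def Zt (A B C E : ℕ → ILForm) : ℕ → ILForm
  | 0 => (B 0) ⋀ (□(C 0))
  | n+1 => (((B (n+1)) ⋀ (Xt A B n)) ⋀ (□(C (n+1)))) ⋀
             ((E (n+1) ▷ A n) ⋀ (E (n+1) ▷ (Zt A B C E n)))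

/-- The principles `R̃_n = X_n → Y_n ▷ Z_n`. -/
def Rtilde (A B C E : ℕ → ILForm) (n : ℕ) : ILForm :=
  (Xt A B n) ⟹ ((Yt A C E n) ▷ (Zt A B C E n))

/-- `X_{k-1}`, with the convention `X_{-1} = ⊤`. -/
def Xminus (A B : ℕ → ILForm) : ℕ → ILForm
  | 0 => ILForm.top
  | n+1 => Xt A B n

/-- `A_{k-1}`, with the convention `A_{-1} = ⊤`. -/
def Aminus (A : ℕ → ILForm) : ℕ → ILForm
  | 0 => ILForm.top
  | n+1 => A n

/-- `Z_{k-1}`, with the convention `Z_{-1} = ⊤`. -/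
def Zminus (A B C E : ℕ → ILForm) : ℕ → ILForm
  | 0 => ILForm.top
  | n+1 => Zt A B C E n

/-- Veltman frames. -/
structure Veltman where
  W : Type
  ne : Nonempty W
  R : W → W → Prop
  S : W → W → W → Prop
  R_trans : ∀ {x y z}, R x y → R y z → R x z
  R_cwf : WellFounded (fun x y => R y x)
  S_dom : ∀ {x y z}, S x y z → R x y ∧ R x z
  S_refl : ∀ {x y}, R x y → S x y y
  S_trans : ∀ {x y z u}, S x y z → S x z u → S x y u
  R_sub_S : ∀ {x y z}, R x y → R y z → S x y z

/-- Forcing in a Veltman model. -/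
def force (F : Veltman) (V : ℕ → F.W → Prop) : ILForm → F.W → Prop
  | .var n => fun w => V n w
  | .bot => fun _ => False
  | .impl a b => fun w => force F V a w → force F V b w
  | .box a => fun w => ∀ v, F.R w v → force F V a v
  | .rhd a b => fun w => ∀ v, F.R w v → force F V a v →
      ∃ u, F.S w v u ∧ force F V b u

/-- A formula is valid on a frame if it is forced at every world under every valuation. -/
def valid (F : Veltman) (A : ILForm) : Prop := ∀ (V : ℕ → F.W → Prop) (w : F.W), force F V A w

/-- The `C`-assuring successor relation `x R^C_⊩ y`. -/
def RC (F : Veltman) (V : ℕ → F.W → Prop) (C : ILForm) (x y : F.W) : Prop :=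
  F.R x y ∧ force F V C y ∧ ∀ z, F.S x y z → force F V C z

/-- The ternary relations `G_n` on a Veltman frame. -/
def G (F : Veltman) : ℕ → F.W → F.W → F.W → Prop
  | 0 => fun x y z => ∀ u, F.R z u → F.S x y u
  | n+1 => fun x y z => ∀ u, F.R z u → F.S x y u ∧ ∀ v, F.S x u v → G F n z u v

/-- The frame conditions `F_n` of the slim hierarchy. -/
def Fcond (F : Veltman) (n : ℕ) : Prop :=
  ∀ w x y z, F.R w x → F.R x y → F.S w y z → G F n x y z

/-- The quaternary relations `B_n` on a Veltman frame. -/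
def Bq (F : Veltman) : ℕ → F.W → F.W → F.W → F.W → Prop
  | 0 => fun x1 x0 y0 y1 => F.R x1 x0 ∧ F.R x0 y0 ∧ F.S x1 y0 y1
  | n+1 => fun x' x0 y0 y' => ∃ xn yn, F.R x' xn ∧ Bq F n xn x0 y0 yn ∧ F.S x' yn y'

/-- The formulas `U_n` of the broad series (with `U_0 := ⊤`, unused). -/
def Ubr (C : ILForm) (D : ℕ → ILForm) : ℕ → ILForm
  | 0 => ILForm.top
  | 1 => ◇(∼(D 1 ▷ (∼C)))
  | n+2 => ◇(((D (n+1)) ▷ (D (n+2))) ⋀ (Ubr C D (n+1)))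

/-- The frame conditions `F^n` of the broad series. -/
def FbroadCond (F : Veltman) (n : ℕ) : Prop :=
  ∀ x1 x0 y0 y1, Bq F n x1 x0 y0 y1 → ∀ u, F.R y1 u → F.S x0 y0 u

/-- The principles `R^n` of the broad series. -/
def Rbroad (A B C : ILForm) (D : ℕ → ILForm) : ℕ → ILForm
  | 0 => (A ▷ B) ⟹ ((∼(A ▷ (∼C))) ▷ (B ⋀ (□C)))
  | n+1 => (A ▷ B) ⟹ (((Ubr C D (n+1)) ⋀ (D (n+1) ▷ A)) ▷ (B ⋀ (□C)))

open Classical in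
lemma force_conj {F : Veltman} {V : ℕ → F.W → Prop} {A B : ILForm} {w : F.W} :
    force F V (A ⋀ B) w ↔ force F V A w ∧ force F V B w := by
  simp only [ILForm.conj, ILForm.neg, force]
  tauto

open Classical in
lemma notRhd {F : Veltman} {V : ℕ → F.W → Prop} {A C : ILForm} {x : F.W}
    (h : force F V (∼(A ▷ (∼C))) x) :
    ∃ y, F.R x y ∧ force F V A y ∧ ∀ s, F.S x y s → force F V C s := by
  simp only [ILForm.neg, force] at h
  by_contra hc
  push_neg at hc
  apply h
  intro v hv hA
  obtain ⟨s, hs, hC⟩ := hc v hv hA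
  exact ⟨s, hs, fun h' => hC h'⟩

lemma Y_extract {F : Veltman} {V : ℕ → F.W → Prop} {A C E : ℕ → ILForm} {n : ℕ} {q : F.W}
    (h : force F V (Yt A C E n) q) :
    ∃ y, F.R q y ∧ force F V (A n) y ∧ ∀ s, F.S q y s → force F V (C n) s := by
  cases n with
  | zero =>
    simp only [Yt] at h
    exact notRhd h
  | succ m =>
    simp only [Yt] at h
    exact notRhd (force_conj.mp h).1

lemma G_succ (F : Veltman) (m : ℕ) (x y z : F.W) :
    G F (m+1) x y z ↔ ∀ u, F.R z u → F.S x y u ∧ ∀ v, F.S x u v → G F m z u v :=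
  Iff.rfl

lemma G_zero (F : Veltman) (x y z : F.W) :
    G F 0 x y z ↔ ∀ u, F.R z u → F.S x y u :=
  Iff.rfl

lemma key (F : Veltman) (A B C E : ℕ → ILForm) (V : ℕ → F.W → Prop) :
    ∀ n p r q, G F (2*n+1) p r q → force F V (Xt A B n) p → force F V (Yt A C E n) q →
      ∃ z, F.S p r z ∧ force F V (Zt A B C E n) z := by
  intro n
  induction n with
  | zero =>
    intro p r q hG hX hY
    rw [show 2*0+1 = 0+1 from rfl, G_succ] at hG
    obtain ⟨y, hqy, hAy, hCy⟩ := Y_extract hY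
    obtain ⟨hSpry, hGy⟩ := hG y hqy
    have hpy : F.R p y := (F.S_dom hSpry).2
    simp only [Xt] at hX
    obtain ⟨z, hSpyz, hBz⟩ := hX y hpy hAy
    have hG0 : G F 0 q y z := hGy z hSpyz
    rw [G_zero] at hG0
    refine ⟨z, F.S_trans hSpry hSpyz, ?_⟩
    simp only [Zt]
    rw [force_conj]
    refine ⟨hBz, ?_⟩
    simp only [force]
    exact fun t ht => hCy t (hG0 t ht)
  | succ n ih =>
    intro p r q hG hX hY
    rw [show 2*(n+1)+1 = (2*n+2)+1 from by ring, G_succ] at hG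
    simp only [Yt] at hY
    obtain ⟨hY1, hYE⟩ := force_conj.mp hY
    obtain ⟨y, hqy, hAy, hCy⟩ := notRhd hY1
    obtain ⟨hSpry, hGy⟩ := hG y hqy
    have hpy : F.R p y := (F.S_dom hSpry).2
    simp only [Xt] at hX
    obtain ⟨z, hSpyz, hBz⟩ := hX y hpy hAy
    have hGz : G F (2*n+2) q y z := hGy z hSpyz
    rw [show (2*n+2 : ℕ) = (2*n+1)+1 from rfl, G_succ] at hGz
    -- hGz : ∀ u, F.R z u → F.S q y u ∧ ∀ v, F.S q u v → G F (2*n+1) z u v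
    refine ⟨z, F.S_trans hSpry hSpyz, ?_⟩
    simp only [Zt]
    rw [force_conj]
    constructor
    · rw [force_conj]
      refine ⟨hBz, ?_⟩
      simp only [force]
      exact fun t ht => hCy t (hGz t ht).1
    · rw [force_conj]
      constructor
      · -- E (n+1) ▷ A n
        simp only [force]
        intro u hzu huE
        obtain ⟨hSqyu, hGu⟩ := hGz u hzu
        have hqu : F.R q u := (F.S_dom hSqyu).2
        obtain ⟨u', hSquu', hYu'⟩ := hYE u hqu huE
        have hGuu' : G F (2*n+1) z u u' := hGu u' hSquu'
        rw [show 2*n+1 = (2*n)+1 from rfl, G_succ] at hGuu'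
        obtain ⟨y', hu'y', hAy', _⟩ := Y_extract hYu'
        exact ⟨y', (hGuu' y' hu'y').1, hAy'⟩
      · -- E (n+1) ▷ Z n
        simp only [force]
        intro u hzu huE
        obtain ⟨hSqyu, hGu⟩ := hGz u hzu
        have hqu : F.R q u := (F.S_dom hSqyu).2
        obtain ⟨u', hSquu', hYu'⟩ := hYE u hqu huE
        have hGuu' : G F (2*n+1) z u u' := hGu u' hSquu'
        have hXz : force F V (Xt A B n) z := (force_conj.mp hBz).2
        exact ih z u u' hGuu' hXz hYu'

/-- If a Veltman frame satisfies `F_{2k}`, then it validates the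
principle `R̃_k = X_k → Y_k ▷ Z_k` under every valuation, for all formulas
`A_i, B_i, C_i, E_i`. -/
theorem stmt8 (F : Veltman) (k : ℕ) (hF : Fcond F (2*k)) (A B C E : ℕ → ILForm) :
    valid F (Rtilde A B C E k) := by
  intro V w
  simp only [Rtilde, force]
  intro hX x hwx hY
  have hG : G F (2*k+1) w x x := by
    rw [G_succ]
    intro y hxy
    exact ⟨F.R_sub_S hwx hxy, fun v hv => hF w x y v hwx hxy hv⟩
  exact key F A B C E V k w x x hG hX hY
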